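/- arXiv:2003.12251 — 4 statements merged into one kernel-verified Lean document; each statement's English description precedes it below -/
import Mathlib

section
/- Let (B, ω) be a finite-dimensional symplectic vector space and A ⊆ B a subspace that is not coisotropic (i.e. the symplectic orthogonal A^⊥ω is not contained in A) and has codimension at least 3. Then there exists a subspace C with A ⊆ C ⊆ B, dim A < dim C < dim B, such that the restriction of ω to C is nondegenerate (C is symplectic). -/
/-!
Pick `u ∈ A^⊥ω \ A`. Since `A = (A^⊥ω)^⊥ω`, some `w ∈ A^⊥ω` has `ω u w ≠ 0`, so `u, w` span a
symplectic plane `D ⊆ A^⊥ω`. Its orthogonal `C = D^⊥ω` is symplectic, contains `A`, and has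
codimension `2`, which lies strictly between `dim A` and `dim B` because `A` has codimension `≥ 3`.
-/

namespace LinearMap.BilinForm

variable {K V : Type*} [Field K] [AddCommGroup V] [Module K V] {B : LinearMap.BilinForm K V}

section IsAlt

variable {u w : V}

lemma IsAlt.eq_zero_of_apply_smul_add_smul_eq_zero (hB : B.IsAlt) (huw : B u w ≠ 0) {a b : K}
    (hxu : B (a • u + b • w) u = 0) (hxw : B (a • u + b • w) w = 0) : a = 0 ∧ b = 0 := by
  have hwu : B w u = -B u w := (hB.neg_eq u w).symm
  simp only [map_add, map_smul, LinearMap.add_apply, LinearMap.smul_apply, smul_eq_mul,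
    hB.self_eq_zero, mul_zero, zero_add, add_zero, hwu, mul_neg, neg_eq_zero] at hxu hxw
  exact ⟨(mul_eq_zero.1 hxw).resolve_right huw, (mul_eq_zero.1 hxu).resolve_right huw⟩

lemma IsAlt.linearIndependent_pair (hB : B.IsAlt) (huw : B u w ≠ 0) :
    LinearIndependent K ![u, w] :=
  LinearIndependent.pair_iff.2 fun _ _ h =>
    hB.eq_zero_of_apply_smul_add_smul_eq_zero huw (by simp [h]) (by simp [h])

lemma IsAlt.finrank_span_pair (hB : B.IsAlt) (huw : B u w ≠ 0) :
    Module.finrank K (Submodule.span K {u, w}) = 2 := by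
  have h := finrank_span_eq_card (hB.linearIndependent_pair huw)
  rwa [Matrix.range_cons_cons_empty, Fintype.card_fin] at h

lemma IsAlt.restrict_span_pair_nondegenerate (hB : B.IsAlt) (huw : B u w ≠ 0) :
    (B.restrict (Submodule.span K {u, w})).Nondegenerate := by
  refine (LinearMap.IsRefl.nondegenerate_iff_separatingLeft
    (fun x y h => hB.isRefl x.1 y.1 h)).2 ?_
  rintro ⟨x, hx⟩ hxD
  obtain ⟨a, b, rfl⟩ := Submodule.mem_span_pair.1 hx
  obtain ⟨rfl, rfl⟩ := hB.eq_zero_of_apply_smul_add_smul_eq_zero huw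
    (hxD ⟨u, Submodule.subset_span (by simp)⟩) (hxD ⟨w, Submodule.subset_span (by simp)⟩)
  simp

end IsAlt

variable [FiniteDimensional K V]

lemma exists_apply_ne_zero_of_not_orthogonal_le (hB : B.Nondegenerate) (hB₀ : B.IsRefl)
    {A : Submodule K V} (hA : ¬ B.orthogonal A ≤ A) :
    ∃ u ∈ B.orthogonal A, ∃ w ∈ B.orthogonal A, B u w ≠ 0 := by
  obtain ⟨w, hw, hwA⟩ := SetLike.not_le_iff_exists.1 hA
  rw [← orthogonal_orthogonal hB hB₀ A, mem_orthogonal_iff] at hwA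
  push Not at hwA
  obtain ⟨u, hu, huw⟩ := hwA
  exact ⟨u, hu, w, hw, huw⟩

lemma restrict_orthogonal_nondegenerate (hB : B.Nondegenerate) (hB₀ : B.IsRefl)
    {W : Submodule K V} (hW : (B.restrict W).Nondegenerate) :
    (B.restrict (B.orthogonal W)).Nondegenerate := by
  rw [restrict_nondegenerate_iff_isCompl_orthogonal hB₀, orthogonal_orthogonal hB hB₀]
  exact (isCompl_orthogonal_of_restrict_nondegenerate hB₀ hW).symm

end LinearMap.BilinForm

open LinearMap.BilinForm in
/-- In a finite-dimensional symplectic vector space `(B, ω)`, a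
non-coisotropic subspace `A` of codimension at least 3 is contained in a proper
intermediate symplectic subspace `C`. -/
theorem stmt0 {B : Type*} [AddCommGroup B] [Module ℝ B] [FiniteDimensional ℝ B]
    (ω : LinearMap.BilinForm ℝ B)
    (hnd : ω.Nondegenerate)
    (halt : ∀ v : B, ω v v = 0)
    (A : Submodule ℝ B)
    (hnotcoiso : ¬ ω.orthogonal A ≤ A)
    (hcodim : Module.finrank ℝ A + 3 ≤ Module.finrank ℝ B) :
    ∃ C : Submodule ℝ B, A ≤ C ∧
      Module.finrank ℝ A < Module.finrank ℝ C ∧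
      Module.finrank ℝ C < Module.finrank ℝ B ∧
      (ω.restrict C).Nondegenerate := by
  have hAlt : ω.IsAlt := halt
  obtain ⟨u, hu, w, hw, huw⟩ := exists_apply_ne_zero_of_not_orthogonal_le hnd hAlt.isRefl hnotcoiso
  set D := Submodule.span ℝ {u, w}
  have hDA : D ≤ ω.orthogonal A := Submodule.span_le.2 (Set.insert_subset hu (by simpa))
  have hD : Module.finrank ℝ D = 2 := hAlt.finrank_span_pair huw
  have hC := finrank_orthogonal hnd D
  refine ⟨ω.orthogonal D, (le_orthogonal_orthogonal hAlt.isRefl).trans (orthogonal_le hDA),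
    by omega, by omega, restrict_orthogonal_nondegenerate hnd hAlt.isRefl
      (hAlt.restrict_span_pair_nondegenerate huw)⟩
end

section
/- Consider a sequence of exhaustions X = ⋃_k X_k and W = ⋃_k W_k with X_k ⊆ X_{k+1}, W_k ⊆ W_{k+1}, together with maps f_k : X_k → W and g_k : W_k → X satisfying f_k(X_k) ⊆ W_k, g_k(W_k) ⊆ X_{k+1}. Suppose there are bijections G_k : X → X with G_k|_{X_k} = g_k ∘ f_k, supp(G_k) ⊆ X_{k+1}, and bijections H_k : W → W with H_k|_{W_k} = f_{k+1} ∘ g_k, supp(H_k) ⊆ W_{k+1}. Define F_1 := f_1 and for k ≥ 2, F_k := (H_{k−1} ∘ ⋯ ∘ H_1)^{−1} ∘ f_k ∘ (G_{k−1} ∘ ⋯ ∘ G_1)|_{X_k}. Then F_k|_{X_{k−1}} = F_{k−1} for all k ≥ 2, so the F_k glue to a map F : X → W. -/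
open Set Function

variable {X W : Type*}

/-- `compFun G k = G_k ∘ ⋯ ∘ G_1` (with `G_0` unused). -/
def compFun (G : ℕ → X → X) : ℕ → X → X
  | 0 => id
  | (k+1) => G (k+1) ∘ compFun G k

/-- `compEquiv H k = H_k ∘ ⋯ ∘ H_1` as a bijection (with `H_0` unused). -/
def compEquiv {W : Type*} (H : ℕ → W ≃ W) : ℕ → W ≃ W
  | 0 => Equiv.refl W
  | (k+1) => (compEquiv H k).trans (H (k+1))

/-- The telescope maps `F_k := (H_{k−1} ∘ ⋯ ∘ H_1)⁻¹ ∘ f_k ∘ (G_{k−1} ∘ ⋯ ∘ G_1)`. -/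
def telescopeF (f : ℕ → X → W) (G : ℕ → X ≃ X) (H : ℕ → W ≃ W)
    (k : ℕ) (x : X) : W :=
  (compEquiv H (k-1)).symm (f k (compFun (fun j => (G j : X → X)) (k-1) x))

/-- Mazur telescope, consistency: `F_k` restricted to `X_{k−1}`
equals `F_{k−1}`, and hence the `F_k` glue to a single map `F : X → W`. -/
theorem stmt9
    (Xs : ℕ → Set X) (Ws : ℕ → Set W)
    (hXmono : ∀ k, Xs k ⊆ Xs (k+1)) (hWmono : ∀ k, Ws k ⊆ Ws (k+1))
    (hXexh : (⋃ k, Xs k) = univ)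
    (f : ℕ → X → W) (g : ℕ → W → X)
    (hfinj : ∀ k, Set.InjOn (f k) (Xs k)) (hginj : ∀ k, Set.InjOn (g k) (Ws k))
    (hf : ∀ k, f k '' Xs k ⊆ Ws k) (hg : ∀ k, g k '' Ws k ⊆ Xs (k+1))
    (G : ℕ → X ≃ X) (H : ℕ → W ≃ W)
    (hG : ∀ k, ∀ x ∈ Xs k, G k x = g k (f k x))
    (hGsupp : ∀ k, ∀ x : X, x ∉ Xs (k+1) → G k x = x)
    (hH : ∀ k, ∀ w ∈ Ws k, H k w = f (k+1) (g k w))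
    (hHsupp : ∀ k, ∀ w : W, w ∉ Ws (k+1) → H k w = w) :
    (∀ k, 2 ≤ k → ∀ x ∈ Xs (k-1),
      telescopeF f G H k x = telescopeF f G H (k-1) x) ∧
    (∃ F : X → W, ∀ k, 1 ≤ k → ∀ x ∈ Xs k, F x = telescopeF f G H k x) := by
  classical
  have hXm : Monotone Xs := monotone_nat_of_le_succ hXmono
  have hGpres : ∀ j n, j + 1 ≤ n → ∀ x ∈ Xs n, G j x ∈ Xs n := by
    intro j n hjn x hx
    by_cases hx1 : x ∈ Xs (j + 1)
    · have hmem : G j x ∈ Xs (j + 1) := by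
        by_contra hgx
        have h2 := hGsupp j (G j x) hgx
        have h3 := (G j).injective h2
        exact hgx (by rw [h3]; exact hx1)
      exact hXm hjn hmem
    · rw [hGsupp j x hx1]; exact hx
  have hcomp : ∀ m n, m + 1 ≤ n → ∀ x ∈ Xs n,
      compFun (fun j => (G j : X → X)) m x ∈ Xs n := by
    intro m
    induction m with
    | zero => intro n _ x hx; exact hx
    | succ m ih =>
      intro n hn x hx
      exact hGpres (m + 1) n hn _ (ih n (le_trans (Nat.le_succ _) hn) x hx)
  have hstep : ∀ m, ∀ x ∈ Xs (m + 1),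
      telescopeF f G H (m + 2) x = telescopeF f G H (m + 1) x := by
    intro m x hx
    set y := compFun (fun j => (G j : X → X)) m x with hy
    have hyX : y ∈ Xs (m + 1) := hcomp m (m + 1) le_rfl x hx
    have hfy : f (m + 1) y ∈ Ws (m + 1) := hf (m + 1) ⟨y, hyX, rfl⟩
    show (compEquiv H (m + 1)).symm
        (f (m + 2) (compFun (fun j => (G j : X → X)) (m + 1) x)) = _
    have hc : compFun (fun j => (G j : X → X)) (m + 1) x = G (m + 1) y := rfl
    rw [hc, hG (m + 1) y hyX, ← hH (m + 1) _ hfy]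
    show ((compEquiv H m).trans (H (m + 1))).symm (H (m + 1) (f (m + 1) y)) = _
    rw [Equiv.symm_trans_apply, Equiv.symm_apply_apply]
    rfl
  have htrans : ∀ k, 1 ≤ k → ∀ l, k ≤ l → ∀ x ∈ Xs k,
      telescopeF f G H l x = telescopeF f G H k x := by
    intro k hk l hl
    induction l, hl using Nat.le_induction with
    | base => intro x _; rfl
    | succ l hl ih =>
      intro x hx
      obtain ⟨l', rfl⟩ : ∃ l', l = l' + 1 := ⟨l - 1, by omega⟩
      rw [show l' + 1 + 1 = l' + 2 from rfl, hstep l' x (hXm hl hx)]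
      exact ih x hx
  have part1 : ∀ k, 2 ≤ k → ∀ x ∈ Xs (k - 1),
      telescopeF f G H k x = telescopeF f G H (k - 1) x := by
    intro k hk x hx
    obtain ⟨m, rfl⟩ : ∃ m, k = m + 2 := ⟨k - 2, by omega⟩
    exact hstep m x hx
  have hex : ∀ x : X, ∃ k, 1 ≤ k ∧ x ∈ Xs k := by
    intro x
    have hx : x ∈ ⋃ k, Xs k := hXexh ▸ mem_univ x
    obtain ⟨k, hk⟩ := mem_iUnion.mp hx
    exact ⟨k + 1, by omega, hXmono k hk⟩
  choose c hc1 hc2 using hex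
  refine ⟨part1, fun x => telescopeF f G H (c x) x, ?_⟩
  intro k hk x hx
  have h1 := htrans k hk (max k (c x)) (le_max_left _ _) x hx
  have h2 := htrans (c x) (hc1 x) (max k (c x)) (le_max_right _ _) x (hc2 x)
  show telescopeF f G H (c x) x = _
  rw [← h2, h1]
end

section
/- In the setting of the Mazur telescope construction: with F_k := (H_{k−1} ∘ ⋯ ∘ H_1)^{−1} ∘ f_k ∘ (G_{k−1} ∘ ⋯ ∘ G_1)|_{X_k}, where H_j|_{W_j} = f_{j+1} ∘ g_j, supp(H_j) ⊆ W_{j+1}, supp(G_j) ⊆ X_{j+1}, g_{k−1}(W_{k−1}) ⊆ X_k, and f_k(X_k) ⊆ W_k, one has W_{k−1} ⊆ F_k(X_k) for every k ≥ 2. Consequently, if W = ⋃_k W_k, the glued map F : X → W with F|_{X_k} = F_k is surjective. -/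
open Set Function

variable {X W : Type*}

lemma equiv_mem_of_supp {α : Type*} (E : α ≃ α) (S : Set α)
    (h : ∀ a ∉ S, E a = a) : ∀ a ∈ S, E a ∈ S := by
  intro a ha
  by_contra hs
  have h2 := h (E a) hs
  have : E a = a := E.injective h2
  rw [this] at hs
  exact hs ha

lemma equiv_symm_supp {α : Type*} (E : α ≃ α) (S : Set α)
    (h : ∀ a ∉ S, E a = a) : ∀ a ∉ S, E.symm a = a := by
  intro a ha
  conv_lhs => rw [← h a ha]
  exact E.symm_apply_apply a

lemma compFun_eq_compEquiv (G : ℕ → X ≃ X) (n : ℕ) :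
    compFun (fun j => (G j : X → X)) n = ⇑(compEquiv G n) := by
  induction n with
  | zero => rfl
  | succ n ih => simp [compFun, compEquiv, ih, Equiv.coe_trans]

/-- Mazur telescope, surjectivity: `W_{k−1} ⊆ F_k(X_k)` for all
`k ≥ 2`; consequently, any glued map `F` with `F|_{X_k} = F_k` is surjective. -/
theorem stmt10
    (Xs : ℕ → Set X) (Ws : ℕ → Set W)
    (hXmono : ∀ k, Xs k ⊆ Xs (k+1)) (hWmono : ∀ k, Ws k ⊆ Ws (k+1))
    (hWexh : (⋃ k, Ws k) = univ)
    (f : ℕ → X → W) (g : ℕ → W → X)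
    (hfinj : ∀ k, Set.InjOn (f k) (Xs k)) (hginj : ∀ k, Set.InjOn (g k) (Ws k))
    (hf : ∀ k, f k '' Xs k ⊆ Ws k) (hg : ∀ k, g k '' Ws k ⊆ Xs (k+1))
    (G : ℕ → X ≃ X) (H : ℕ → W ≃ W)
    (hG : ∀ k, ∀ x ∈ Xs k, G k x = g k (f k x))
    (hGsupp : ∀ k, ∀ x : X, x ∉ Xs (k+1) → G k x = x)
    (hH : ∀ k, ∀ w ∈ Ws k, H k w = f (k+1) (g k w))
    (hHsupp : ∀ k, ∀ w : W, w ∉ Ws (k+1) → H k w = w) :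
    (∀ k, 2 ≤ k → Ws (k-1) ⊆ telescopeF f G H k '' Xs k) ∧
    (∀ F : X → W, (∀ k, 1 ≤ k → ∀ x ∈ Xs k, F x = telescopeF f G H k x) →
      Function.Surjective F) := by
  have hWmono' : ∀ {a b : ℕ}, a ≤ b → Ws a ⊆ Ws b := by
    intro a b hab
    exact monotone_nat_of_le_succ (f := Ws) (fun n => hWmono n) hab
  have hXmono' : ∀ {a b : ℕ}, a ≤ b → Xs a ⊆ Xs b := by
    intro a b hab
    exact monotone_nat_of_le_succ (f := Xs) (fun n => hXmono n) hab
  -- each `H i` preserves `Ws m` whenever `i + 1 ≤ m`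
  have hHpres : ∀ i m : ℕ, i + 1 ≤ m → ∀ w ∈ Ws m, H i w ∈ Ws m := by
    intro i m him w hw
    by_cases h2 : w ∈ Ws (i+1)
    · exact hWmono' him (equiv_mem_of_supp (H i) (Ws (i+1)) (hHsupp i) w h2)
    · rw [hHsupp i w h2]; exact hw
  -- `compEquiv H j` preserves `Ws m` whenever `j < m`
  have hHcomp : ∀ j m : ℕ, j < m → ∀ w ∈ Ws m, compEquiv H j w ∈ Ws m := by
    intro j
    induction j with
    | zero => intro m _ w hw; simpa [compEquiv] using hw
    | succ j ih =>
        intro m hjm w hw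
        have h1 : compEquiv H j w ∈ Ws m := ih m (by omega) w hw
        have : compEquiv H (j+1) w = H (j+1) (compEquiv H j w) := rfl
        rw [this]
        exact hHpres (j+1) m (by omega) _ h1
  -- `(compEquiv G j).symm` preserves `Xs m` whenever `j < m`
  have hGcomp : ∀ j m : ℕ, j < m → ∀ x ∈ Xs m, (compEquiv G j).symm x ∈ Xs m := by
    intro j
    induction j with
    | zero => intro m _ x hx; simpa [compEquiv] using hx
    | succ j ih =>
        intro m hjm x hx
        have hstep : (G (j+1)).symm x ∈ Xs m := by
          by_cases h2 : x ∈ Xs (j+2)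
          · refine hXmono' (by omega : j + 2 ≤ m) ?_
            exact equiv_mem_of_supp (G (j+1)).symm (Xs (j+2))
              (equiv_symm_supp (G (j+1)) (Xs (j+2)) (hGsupp (j+1))) x h2
          · rw [equiv_symm_supp (G (j+1)) (Xs (j+2)) (hGsupp (j+1)) x h2]; exact hx
        have : (compEquiv G (j+1)).symm x
            = (compEquiv G j).symm ((G (j+1)).symm x) := rfl
        rw [this]
        exact ih m (by omega) _ hstep
  have main : ∀ k, 2 ≤ k → Ws (k-1) ⊆ telescopeF f G H k '' Xs k := by
    intro k hk w hw
    obtain ⟨m, rfl⟩ : ∃ m, k = m + 2 := ⟨k - 2, by omega⟩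
    have hmk : m + 2 - 1 = m + 1 := rfl
    rw [hmk] at hw
    set u : W := compEquiv H m w with hu_def
    have hu : u ∈ Ws (m+1) := hHcomp m (m+1) (by omega) w hw
    have hgu : g (m+1) u ∈ Xs (m+2) := hg (m+1) ⟨u, hu, rfl⟩
    set x : X := (compEquiv G (m+1)).symm (g (m+1) u) with hx_def
    have hx : x ∈ Xs (m+2) := hGcomp (m+1) (m+2) (by omega) _ hgu
    refine ⟨x, hx, ?_⟩
    unfold telescopeF
    rw [hmk, compFun_eq_compEquiv]
    have h1 : compEquiv G (m+1) x = g (m+1) u := (compEquiv G (m+1)).apply_symm_apply _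
    rw [h1, ← hH (m+1) u hu]
    have h2 : H (m+1) u = compEquiv H (m+1) w := rfl
    rw [h2, Equiv.symm_apply_apply]
  refine ⟨main, ?_⟩
  intro F hF w
  have hw : w ∈ ⋃ k, Ws k := hWexh ▸ mem_univ w
  obtain ⟨k, hk⟩ := mem_iUnion.mp hw
  have hw' : w ∈ Ws (k+1) := hWmono k hk
  obtain ⟨x, hx, hxw⟩ := main (k+2) (by omega) (show w ∈ Ws (k+2-1) from hw')
  exact ⟨x, by rw [hF (k+2) (by omega) x hx]; exact hxw⟩
end

section
/- Let (X, dμ) be a convex symplectic manifold with Liouville field Z and exhaustion by Liouville domains. Suppose μ₀ = μ and μ₁ = μ + dH for a smooth function H, and suppose both are Liouville forms admitting exhaustions X = ⋃_j X_j^0 and X = ⋃_j X_j^1 with X_j^1 ⊆ int X_j^0 ⊆ X_j^0 ⊆ int X_{j+1}^1. Let H̃ be a smooth function equal to 0 near ⋃_j ∂X_j^0 and equal to H near ⋃_j ∂X_j^1. Then the family μ_s := μ₀ + 2s dH̃ for s ∈ [0, 1/2] and μ_s := μ₀ + dH̃ + (2s−1) d(H − H̃) for s ∈ [1/2, 1]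 is a concatenation of two simple Liouville homotopies connecting μ₀ and μ₁ (with constant exhaustions ⋃ X_j^0 and ⋃ X_j^1 respectively). -/
noncomputable section

open Set

variable {E : Type*} [NormedAddCommGroup E] [NormedSpace ℝ E]

/-- Exterior derivative of a 1-form (modeled on a normed space). -/
def extDeriv1 (lam : E → (E →L[ℝ] ℝ)) (x v w : E) : ℝ :=
  fderiv ℝ lam x v w - fderiv ℝ lam x w v

/-- The vector field `Z` points outward from the compact domain `K` at the
boundary point `x`. -/
def OutwardAt (Z : E → E) (K : Set E) (x : E) : Prop :=
  Z x ≠ 0 ∧ ∃ ε > (0:ℝ), ∀ t : ℝ, 0 < t → t < ε →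
    x + t • Z x ∉ K ∧ x - t • Z x ∈ interior K

/-- `Z` is a Liouville field for `μ` and `Xj` is an exhaustion by compact
domains with `Z` outward transverse to their boundaries. -/
def IsLiouvilleExhaustion (μ : E → (E →L[ℝ] ℝ)) (Z : E → E)
    (Xj : ℕ → Set E) : Prop :=
  (∀ x w, extDeriv1 μ x (Z x) w = μ x w) ∧
  (∀ j, IsCompact (Xj j)) ∧
  (∀ j, Xj j ⊆ interior (Xj (j+1))) ∧
  (⋃ j, Xj j) = univ ∧
  (∀ j, ∀ x ∈ frontier (Xj j), OutwardAt Z (Xj j) x)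

/-- The interpolating family `μ_s` of the statement: `μ₀ + 2s dH̃` for
`s ∈ [0,1/2]` and `μ₀ + dH̃ + (2s−1) d(H − H̃)` for `s ∈ [1/2,1]`. -/
def interpFamily (μ : E → (E →L[ℝ] ℝ)) (H Ht : E → ℝ) (s : ℝ) (x : E) :
    E →L[ℝ] ℝ :=
  if s ≤ 1/2 then μ x + (2*s) • fderiv ℝ Ht x
  else μ x + fderiv ℝ Ht x + (2*s - 1) • (fderiv ℝ H x - fderiv ℝ Ht x)

/-! ### Auxiliary lemmas -/

/-- Symmetry of the second derivative of a smooth scalar function. -/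
lemma sderiv_symm (f : E → ℝ) (hf : ContDiff ℝ (⊤ : ℕ∞) f) (x v w : E) :
    fderiv ℝ (fderiv ℝ f) x v w = fderiv ℝ (fderiv ℝ f) x w v :=
  second_derivative_symmetric
    (fun y => ((hf.differentiable (by simp)) y).hasFDerivAt)
    (((hf.fderiv_right (m := (⊤ : ℕ∞)) (by simp)).differentiable (by simp)) x).hasFDerivAt v w

/-- The exterior derivative does not see exact perturbations. -/
lemma extDeriv1_perturb (μ : E → (E →L[ℝ] ℝ)) (hμ : ContDiff ℝ (⊤ : ℕ∞) μ)
    (f g : E → ℝ) (hf : ContDiff ℝ (⊤ : ℕ∞) f) (hg : ContDiff ℝ (⊤ : ℕ∞) g) (a b : ℝ) (x v w : E) :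
    extDeriv1 (fun y => μ y + a • fderiv ℝ f y + b • fderiv ℝ g y) x v w
      = extDeriv1 μ x v w := by
  have hf' : DifferentiableAt ℝ (fderiv ℝ f) x :=
    ((hf.fderiv_right (m := (⊤ : ℕ∞)) (by simp)).differentiable (by simp)) x
  have hg' : DifferentiableAt ℝ (fderiv ℝ g) x :=
    ((hg.fderiv_right (m := (⊤ : ℕ∞)) (by simp)).differentiable (by simp)) x
  have hμ' : DifferentiableAt ℝ μ x := (hμ.differentiable (by simp)) x
  have hD : fderiv ℝ (fun y => μ y + a • fderiv ℝ f y + b • fderiv ℝ g y) x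
      = fderiv ℝ μ x + a • fderiv ℝ (fderiv ℝ f) x + b • fderiv ℝ (fderiv ℝ g) x :=
    (((hμ'.hasFDerivAt.add (hf'.hasFDerivAt.const_smul a)).add
      (hg'.hasFDerivAt.const_smul b))).fderiv
  simp only [extDeriv1, hD, ContinuousLinearMap.add_apply, ContinuousLinearMap.smul_apply]
  have h1 := sderiv_symm f hf x v w
  have h2 := sderiv_symm g hg x v w
  ring_nf
  rw [h1, h2]
  ring

/-- `extDeriv1` is additive in the contracted vector. -/
lemma extDeriv1_add (lam : E → (E →L[ℝ] ℝ)) (x v v' w : E) :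
    extDeriv1 lam x (v + v') w = extDeriv1 lam x v w + extDeriv1 lam x v' w := by
  simp only [extDeriv1, map_add, ContinuousLinearMap.add_apply]
  ring

/-- The pairing `v ↦ dμ(v, ·)` as a continuous linear map. -/
def Bmap (μ : E → (E →L[ℝ] ℝ)) (x : E) : E →L[ℝ] (E →L[ℝ] ℝ) :=
  fderiv ℝ μ x - (fderiv ℝ μ x).flip

lemma Bmap_apply (μ : E → (E →L[ℝ] ℝ)) (x v w : E) :
    Bmap μ x v w = extDeriv1 μ x v w := by
  simp [Bmap, extDeriv1, ContinuousLinearMap.sub_apply, ContinuousLinearMap.flip_apply]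

lemma Bmap_inj [FiniteDimensional ℝ E] (μ : E → (E →L[ℝ] ℝ))
    (hnd : ∀ x v, v ≠ 0 → ∃ w, extDeriv1 μ x v w ≠ 0) (x : E) :
    Function.Injective (Bmap μ x) := by
  intro v v' h
  by_contra hne
  have hvv : v - v' ≠ 0 := sub_ne_zero.mpr hne
  obtain ⟨w, hw⟩ := hnd x (v - v') hvv
  apply hw
  rw [← Bmap_apply, map_sub, h]
  simp

lemma Bmap_surj [FiniteDimensional ℝ E] (μ : E → (E →L[ℝ] ℝ))
    (hnd : ∀ x v, v ≠ 0 → ∃ w, extDeriv1 μ x v w ≠ 0) (x : E) :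
    Function.Surjective (Bmap μ x) := by
  have hfr : Module.finrank ℝ E = Module.finrank ℝ (E →L[ℝ] ℝ) := by
    rw [← (LinearMap.toContinuousLinearMap (𝕜 := ℝ) (E := E) (F' := ℝ)).finrank_eq]
    exact (Subspace.dual_finrank_eq (K := ℝ) (V := E)).symm
  exact (LinearMap.injective_iff_surjective_of_finrank_eq_finrank
    (f := (Bmap μ x).toLinearMap) hfr).mp (Bmap_inj μ hnd x)

/-- OutwardAt depends only on the value of the field at the point. -/
lemma outwardAt_congr {Z Z' : E → E} {K : Set E} {x : E} (h : Z x = Z' x) :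
    OutwardAt Z' K x → OutwardAt Z K x := by
  simp only [OutwardAt, h]
  exact id

/-- the family `μ_s` is a concatenation of two simple Liouville
homotopies (with the constant exhaustions `X^0` and `X^1` respectively)
connecting `μ₀ = μ` and `μ₁ = μ + dH`. -/
theorem stmt16 [FiniteDimensional ℝ E]
    (μ : E → (E →L[ℝ] ℝ)) (hμ : ContDiff ℝ (⊤ : ℕ∞) μ)
    (hnd : ∀ x v, v ≠ 0 → ∃ w, extDeriv1 μ x v w ≠ 0)
    (H Ht : E → ℝ) (hH : ContDiff ℝ (⊤ : ℕ∞) H) (hHt : ContDiff ℝ (⊤ : ℕ∞) Ht)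
    (Z0 Z1 : E → E)
    (X0 X1 : ℕ → Set E)
    (h0 : IsLiouvilleExhaustion μ Z0 X0)
    (h1 : IsLiouvilleExhaustion (fun x => μ x + fderiv ℝ H x) Z1 X1)
    (hnested : ∀ j, X1 j ⊆ interior (X0 j) ∧ X0 j ⊆ interior (X1 (j+1)))
    (hHt0 : ∃ U : Set E, IsOpen U ∧ (⋃ j, frontier (X0 j)) ⊆ U ∧
      EqOn Ht 0 U)
    (hHtH : ∃ U : Set E, IsOpen U ∧ (⋃ j, frontier (X1 j)) ⊆ U ∧
      EqOn Ht H U) :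
    (∀ x, interpFamily μ H Ht 0 x = μ x) ∧
    (∀ x, interpFamily μ H Ht 1 x = μ x + fderiv ℝ H x) ∧
    (∃ Z : ℝ → E → E, ∀ s ∈ Icc (0:ℝ) (1/2),
      IsLiouvilleExhaustion (interpFamily μ H Ht s) (Z s) X0) ∧
    (∃ Z : ℝ → E → E, ∀ s ∈ Icc (1/2 : ℝ) 1,
      IsLiouvilleExhaustion (interpFamily μ H Ht s) (Z s) X1) := by
  obtain ⟨U0, hU0o, hU0s, hU0e⟩ := hHt0
  obtain ⟨U1, hU1o, hU1s, hU1e⟩ := hHtH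
  -- solving dμ(v,·) = φ
  have hex : ∀ (x : E) (φ : E →L[ℝ] ℝ), ∃ v, Bmap μ x v = φ :=
    fun x φ => Bmap_surj μ hnd x φ
  choose sol hsol using hex
  have hsol0 : ∀ x, sol x 0 = 0 := by
    intro x
    apply Bmap_inj μ hnd x
    rw [hsol]; simp
  -- derivative of Ht on the frontiers
  have hfd0 : ∀ x ∈ ⋃ j, frontier (X0 j), fderiv ℝ Ht x = 0 := by
    intro x hx
    have hev : Ht =ᶠ[nhds x] (fun _ => (0:ℝ)) :=
      Filter.eventuallyEq_of_mem (hU0o.mem_nhds (hU0s hx)) hU0e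
    rw [hev.fderiv_eq, fderiv_fun_const]
    rfl
  have hfd1 : ∀ x ∈ ⋃ j, frontier (X1 j), fderiv ℝ Ht x = fderiv ℝ H x := by
    intro x hx
    have hev : Ht =ᶠ[nhds x] H :=
      Filter.eventuallyEq_of_mem (hU1o.mem_nhds (hU1s hx)) hU1e
    exact hev.fderiv_eq
  -- Liouville identity for Z1 with respect to dμ
  have hLZ1 : ∀ x w, extDeriv1 μ x (Z1 x) w = μ x w + fderiv ℝ H x w := by
    intro x w
    have hfun : (fun x => μ x + fderiv ℝ H x)
        = fun y => μ y + (0:ℝ) • fderiv ℝ Ht y + (1:ℝ) • fderiv ℝ H y := by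
      funext y; simp
    have := h1.1 x w
    rw [hfun, extDeriv1_perturb μ hμ Ht H hHt hH 0 1 x (Z1 x) w] at this
    simpa using this
  refine ⟨?_, ?_, ?_, ?_⟩
  · intro x; simp [interpFamily]
  · intro x
    have h1le : ¬ ((1:ℝ) ≤ 1/2) := by norm_num
    simp only [interpFamily, if_neg h1le]
    norm_num
  · -- first simple homotopy, over the exhaustion X0
    refine ⟨fun s x => Z0 x + sol x ((2*s) • fderiv ℝ Ht x), ?_⟩
    rintro s ⟨hs0, hs1⟩
    have hform : interpFamily μ H Ht s = fun x => μ x + (2*s) • fderiv ℝ Ht x :=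
      funext fun x => if_pos hs1
    refine ⟨?_, h0.2.1, h0.2.2.1, h0.2.2.2.1, ?_⟩
    · intro x w
      have hfun : (fun x => μ x + (2*s) • fderiv ℝ Ht x)
          = fun y => μ y + (2*s) • fderiv ℝ Ht y + (0:ℝ) • fderiv ℝ H y := by
        funext y; simp
      rw [hform, hfun, extDeriv1_perturb μ hμ Ht H hHt hH (2*s) 0 x _ w,
        extDeriv1_add, h0.1 x w, ← Bmap_apply, hsol]
      simp
    · intro j x hx
      refine outwardAt_congr ?_ (h0.2.2.2.2 j x hx)
      show Z0 x + sol x ((2*s) • fderiv ℝ Ht x) = Z0 x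
      rw [hfd0 x (mem_iUnion.mpr ⟨j, hx⟩), smul_zero, hsol0, add_zero]
  · -- second simple homotopy, over the exhaustion X1
    refine ⟨fun s x => Z1 x + sol x ((2 - 2*s) • (fderiv ℝ Ht x - fderiv ℝ H x)), ?_⟩
    rintro s ⟨hs0, hs1⟩
    have hform : interpFamily μ H Ht s
        = fun x => μ x + (2 - 2*s) • fderiv ℝ Ht x + (2*s - 1) • fderiv ℝ H x := by
      funext x
      unfold interpFamily
      split_ifs with h
      · have hs : s = 1/2 := le_antisymm h hs0
        subst hs
        norm_num
      · module
    refine ⟨?_, h1.2.1, h1.2.2.1, h1.2.2.2.1, ?_⟩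
    · intro x w
      rw [hform, extDeriv1_perturb μ hμ Ht H hHt hH (2 - 2*s) (2*s - 1) x _ w,
        extDeriv1_add, hLZ1 x w, ← Bmap_apply, hsol]
      simp only [ContinuousLinearMap.add_apply, ContinuousLinearMap.smul_apply,
        ContinuousLinearMap.sub_apply, smul_eq_mul]
      ring
    · intro j x hx
      refine outwardAt_congr ?_ (h1.2.2.2.2 j x hx)
      show Z1 x + sol x ((2 - 2*s) • (fderiv ℝ Ht x - fderiv ℝ H x)) = Z1 x
      rw [hfd1 x (mem_iUnion.mpr ⟨j, hx⟩), sub_self, smul_zero, hsol0, add_zero]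
end
end
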